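/- arXiv:1809.02060 — 8 statements merged into one kernel-verified Lean document; each statement's English description precedes it below -/
import Mathlib

section
/- Let p = (x,x,z) with x > 0. Then p lies in the sliding region (Xh(p) < 0 and Yh(p) > 0) if and only if z > r1 - r2, and p lies in the crossing region (Xh(p)·Yh(p) > 0) if and only if 0 ≤ z < r1 - r2. -/
/-- For `p = (x,x,z)` with `x > 0`, `z ≥ 0`: `p` is in the sliding region
(`Xh(p) < 0` and `Yh(p) > 0`) iff `z > r1 - r2`, and in the crossing region
(`Xh(p)·Yh(p) > 0`) iff `0 ≤ z < r1 - r2`. -/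
theorem sliding_crossing_regions
    (r1 r2 β1 β2 e q1 q2 aq m : ℝ) (hr : r2 < r1) (hr2 : 0 < r2)
    (hβ1 : 0 < β1) (hβ2 : 0 < β2) (he : 0 < e) (hq1 : 0 < q1)
    (hq2 : 0 < q2) (haq : 0 < aq) (hm : 0 < m)
    (X Y : ℝ × ℝ × ℝ → ℝ × ℝ × ℝ)
    (hX : ∀ x y z, X (x, y, z) = ((r1 - z) * x, r2 * y, (e * q1 * x - m) * z))
    (hY : ∀ x y z, Y (x, y, z) =
      (r1 * x, (r2 - (β2 / β1) * z) * y, ((e * q2 / aq) * y - m) * z))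
    (h : ℝ × ℝ × ℝ → ℝ) (hh : ∀ x y z, h (x, y, z) = x - y) :
    ∀ x z : ℝ, 0 < x → 0 ≤ z →
      ((fderiv ℝ h (x, x, z) (X (x, x, z)) < 0 ∧
        0 < fderiv ℝ h (x, x, z) (Y (x, x, z))) ↔ r1 - r2 < z) ∧
      (0 < fderiv ℝ h (x, x, z) (X (x, x, z)) *
        fderiv ℝ h (x, x, z) (Y (x, x, z)) ↔ 0 ≤ z ∧ z < r1 - r2) := by
  -- h equals a continuous linear map
  set L : ℝ × ℝ × ℝ →L[ℝ] ℝ :=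
    (ContinuousLinearMap.fst ℝ ℝ (ℝ × ℝ)) -
      (ContinuousLinearMap.fst ℝ ℝ ℝ).comp (ContinuousLinearMap.snd ℝ ℝ (ℝ × ℝ)) with hL
  have hfun : h = L := by
    funext p
    obtain ⟨a, b, c⟩ := p
    simp [hL, hh a b c]
  intro x z hx hz
  have hfd : fderiv ℝ h (x, x, z) = L := by
    rw [hfun]; exact L.fderiv
  have hXv : fderiv ℝ h (x, x, z) (X (x, x, z)) = (r1 - z - r2) * x := by
    rw [hfd, hX]; simp [hL]; ring
  have hYv : fderiv ℝ h (x, x, z) (Y (x, x, z)) = (r1 - r2 + (β2 / β1) * z) * x := by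
    rw [hfd, hY]; simp [hL]; ring
  have hb : 0 < β2 / β1 := div_pos hβ2 hβ1
  have hYpos : 0 < fderiv ℝ h (x, x, z) (Y (x, x, z)) := by
    rw [hYv]
    have : 0 < r1 - r2 + (β2 / β1) * z := by
      have := mul_nonneg hb.le hz
      linarith
    exact mul_pos this hx
  rw [hYv] at hYpos
  simp only [hXv, hYv]
  clear hXv hYv hfd hfun hX hY hh
  clear_value L
  clear hL L h X Y
  have hrz : 0 < r1 - r2 + β2 / β1 * z := by nlinarith
  constructor
  · constructor
    · rintro ⟨h1, -⟩; nlinarith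
    · intro h1; exact ⟨by nlinarith, hYpos⟩
  · constructor
    · intro hp
      refine ⟨hz, ?_⟩
      have hXpos : 0 < (r1 - z - r2) * x := by nlinarith
      nlinarith
    · rintro ⟨-, h2⟩
      have : 0 < (r1 - z - r2) * x := by nlinarith
      nlinarith
end

section
/- For the vector field X(x,y,z) = ((r1 - z)x, r2*y, (e*q1*x - m)z) and h(x,y,z) = x - y, the second Lie derivative X²h = ⟨∇(Xh), X⟩ evaluated at a tangency point p̄ = (x, x, r1 - r2) equals (r1 - r2)*(m - e*q1*x)*x. In particular X²h(p̄) > 0 for 0 < x < m/(e*q1) (visible fold points), and X²h(p̄) = 0 exactly when x = 0 or x = m/(e*q1). -/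
/-- The second Lie derivative `X²h` at the tangency point `p̄ = (x,x,r1-r2)`
equals `(r1 - r2)(m - e q1 x)x`; it is positive for `0 < x < m/(e q1)` and
vanishes exactly when `x = 0` or `x = m/(e q1)`. -/
theorem second_lie_derivative
    (r1 r2 e q1 m : ℝ) (hr : r2 < r1) (hr2 : 0 < r2) (he : 0 < e)
    (hq1 : 0 < q1) (hm : 0 < m)
    (X : ℝ × ℝ × ℝ → ℝ × ℝ × ℝ)
    (hX : ∀ x y z, X (x, y, z) = ((r1 - z) * x, r2 * y, (e * q1 * x - m) * z))
    (h : ℝ × ℝ × ℝ → ℝ) (hh : ∀ x y z, h (x, y, z) = x - y)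
    (Xh : ℝ × ℝ × ℝ → ℝ) (hXh : ∀ p, Xh p = fderiv ℝ h p (X p))
    (X2h : ℝ × ℝ × ℝ → ℝ) (hX2h : ∀ p, X2h p = fderiv ℝ Xh p (X p)) :
    ∀ x : ℝ,
      X2h (x, x, r1 - r2) = (r1 - r2) * (m - e * q1 * x) * x ∧
      (0 < x → x < m / (e * q1) → 0 < X2h (x, x, r1 - r2)) ∧
      (X2h (x, x, r1 - r2) = 0 ↔ x = 0 ∨ x = m / (e * q1)) := by
  intro x
  have hfun : h = fun p : ℝ × ℝ × ℝ => p.1 - p.2.1 := by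
    funext p; obtain ⟨a, b, c⟩ := p; exact hh a b c
  have hXfun : X = fun p : ℝ × ℝ × ℝ =>
      ((r1 - p.2.2) * p.1, r2 * p.2.1, (e * q1 * p.1 - m) * p.2.2) := by
    funext p; obtain ⟨a, b, c⟩ := p; exact hX a b c
  have hXhfun : Xh = fun p : ℝ × ℝ × ℝ => (r1 - p.2.2) * p.1 - r2 * p.2.1 := by
    funext p
    have hd : HasFDerivAt h ((ContinuousLinearMap.fst ℝ ℝ (ℝ × ℝ)) -
        (ContinuousLinearMap.fst ℝ ℝ ℝ).comp (ContinuousLinearMap.snd ℝ ℝ (ℝ × ℝ))) p := by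
      rw [hfun]
      exact hasFDerivAt_fst.sub (hasFDerivAt_fst.comp p hasFDerivAt_snd)
    rw [hXh p, hd.fderiv, hXfun]
    simp
  have hsnd2 : HasFDerivAt (fun p : ℝ × ℝ × ℝ => p.2.2)
      ((ContinuousLinearMap.snd ℝ ℝ ℝ).comp (ContinuousLinearMap.snd ℝ ℝ (ℝ × ℝ)))
      (x, x, r1 - r2) := hasFDerivAt_snd.comp _ hasFDerivAt_snd
  have hsnd1 : HasFDerivAt (fun p : ℝ × ℝ × ℝ => p.2.1)
      ((ContinuousLinearMap.fst ℝ ℝ ℝ).comp (ContinuousLinearMap.snd ℝ ℝ (ℝ × ℝ)))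
      (x, x, r1 - r2) := hasFDerivAt_fst.comp _ hasFDerivAt_snd
  have hD := (((hasFDerivAt_const r1 ((x, x, r1 - r2) : ℝ × ℝ × ℝ)).sub hsnd2).mul
      hasFDerivAt_fst).sub (hsnd1.const_mul r2)
  have hval : X2h (x, x, r1 - r2) = (r1 - r2) * (m - e * q1 * x) * x := by
    rw [hX2h, hXhfun, (show HasFDerivAt (fun p : ℝ × ℝ × ℝ => (r1 - p.2.2) * p.1 - r2 * p.2.1) _ (x, x, r1 - r2) from hD).fderiv, hX]
    simp
    ring
  have heq : e * q1 ≠ 0 := by positivity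
  refine ⟨hval, ?_, ?_⟩
  · intro hx hx'
    rw [hval]
    have h1 : e * q1 * x < m := by
      have := (lt_div_iff₀ (by positivity : (0:ℝ) < e * q1)).mp hx'
      linarith
    have h2 : 0 < m - e * q1 * x := by linarith
    exact mul_pos (mul_pos (by linarith) h2) hx
  · rw [hval]
    constructor
    · intro h0
      rcases mul_eq_zero.mp h0 with h0 | h0
      · rcases mul_eq_zero.mp h0 with h0 | h0
        · exact absurd h0 (by intro hc; linarith [sub_eq_zero.mp hc])
        · right
          field_simp
          linarith [sub_eq_zero.mp h0]
      · exact Or.inl h0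
    · rintro (rfl | rfl)
      · ring
      · field_simp
        ring
end

section
/- The Filippov sliding vector field Z^s(p) = (Yh(p)·X(p) − Xh(p)·Y(p)) / (Yh(p) − Xh(p)), computed at a point p = (x,x,z) of the switching plane with x > 0 and z > r1 − r2, has its first and third components equal to Z^s₁ = ((β1 r2 + β2 r1)/(β1 + β2))x − (β2/(β1 + β2))x z and Z^s₃ = (e(a_q q1 − q2)(r1 − r2)β1/(a_q(β1 + β2)))x − m z + (e(β1 q2 + a_q β2 q1)/(a_q(β1 + β2)))x z, and its first two components are equal (the sliding field is tangent to the plane x = y). -/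
noncomputable def Lh : (ℝ × ℝ × ℝ) →L[ℝ] ℝ :=
  (ContinuousLinearMap.fst ℝ ℝ (ℝ × ℝ)) -
    (ContinuousLinearMap.fst ℝ ℝ ℝ).comp (ContinuousLinearMap.snd ℝ ℝ (ℝ × ℝ))

lemma Lh_apply (v : ℝ × ℝ × ℝ) : Lh v = v.1 - v.2.1 := rfl

lemma fderiv_h (h : ℝ × ℝ × ℝ → ℝ) (hh : ∀ x y z, h (x, y, z) = x - y)
    (p v : ℝ × ℝ × ℝ) : fderiv ℝ h p v = v.1 - v.2.1 := by
  have : h = Lh := by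
    funext q
    obtain ⟨a, b, c⟩ := q
    rw [hh]; rfl
  rw [this, ContinuousLinearMap.fderiv, Lh_apply]
/-- The Filippov sliding vector field
`Z^s(p) = (Yh(p)•X(p) − Xh(p)•Y(p))/(Yh(p) − Xh(p))` at `p = (x,x,z)` with
`x > 0`, `z > r1 − r2`, has the stated first and third components, and its
first two components are equal. -/
theorem filippov_sliding_field
    (r1 r2 β1 β2 e q1 q2 aq m : ℝ) (hr : r2 < r1) (hr2 : 0 < r2)
    (hβ1 : 0 < β1) (hβ2 : 0 < β2) (he : 0 < e) (hq1 : 0 < q1)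
    (hq2 : 0 < q2) (haq : 0 < aq) (hm : 0 < m)
    (X Y : ℝ × ℝ × ℝ → ℝ × ℝ × ℝ)
    (hX : ∀ x y z, X (x, y, z) = ((r1 - z) * x, r2 * y, (e * q1 * x - m) * z))
    (hY : ∀ x y z, Y (x, y, z) =
      (r1 * x, (r2 - (β2 / β1) * z) * y, ((e * q2 / aq) * y - m) * z))
    (h : ℝ × ℝ × ℝ → ℝ) (hh : ∀ x y z, h (x, y, z) = x - y)
    (Xh Yh : ℝ × ℝ × ℝ → ℝ)
    (hXh : ∀ p, Xh p = fderiv ℝ h p (X p))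
    (hYh : ∀ p, Yh p = fderiv ℝ h p (Y p))
    (Zs : ℝ × ℝ × ℝ → ℝ × ℝ × ℝ)
    (hZs : ∀ p, Yh p ≠ Xh p →
      Zs p = (Yh p - Xh p)⁻¹ • (Yh p • X p - Xh p • Y p)) :
    ∀ x z : ℝ, 0 < x → r1 - r2 < z →
      (Zs (x, x, z)).1 =
        ((β1 * r2 + β2 * r1) / (β1 + β2)) * x - (β2 / (β1 + β2)) * x * z ∧
      (Zs (x, x, z)).2.2 =
        (e * (aq * q1 - q2) * (r1 - r2) * β1 / (aq * (β1 + β2))) * x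
          - m * z + (e * (β1 * q2 + aq * β2 * q1) / (aq * (β1 + β2))) * x * z ∧
      (Zs (x, x, z)).1 = (Zs (x, x, z)).2.1 := by
  intro x z hx hz
  set p : ℝ × ℝ × ℝ := (x, x, z) with hp
  have hXp : X p = ((r1 - z) * x, r2 * x, (e * q1 * x - m) * z) := hX x x z
  have hYp : Y p = (r1 * x, (r2 - (β2 / β1) * z) * x, ((e * q2 / aq) * x - m) * z) := hY x x z
  have hXhp : Xh p = (r1 - z) * x - r2 * x := by
    rw [hXh, fderiv_h h hh, hXp]
  have hYhp : Yh p = r1 * x - (r2 - (β2 / β1) * z) * x := by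
    rw [hYh, fderiv_h h hh, hYp]
  have hz0 : 0 < z := lt_of_le_of_lt (by linarith) hz
  have hd : Yh p - Xh p = (1 + β2 / β1) * z * x := by
    rw [hXhp, hYhp]; ring
  have hdne : Yh p - Xh p ≠ 0 := by
    rw [hd]
    positivity
  have hne : Yh p ≠ Xh p := fun hc => hdne (by rw [hc]; ring)
  have hZ := hZs p hne
  rw [hXp, hYp] at hZ
  have hb1 : β1 + β2 ≠ 0 := by positivity
  have h1 : (Zs p).1 = ((β1 * r2 + β2 * r1) / (β1 + β2)) * x - (β2 / (β1 + β2)) * x * z := by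
    rw [hZ]
    simp only [Prod.smul_fst, Prod.smul_snd, Prod.fst_sub, Prod.snd_sub, smul_eq_mul]
    rw [hd, hXhp, hYhp]
    have hx' := hx.ne'
    have hz' := hz0.ne'
    have hβ1' := hβ1.ne'
    have hβ2' := hβ2.ne'
    have haq' := haq.ne'
    field_simp
    ring
  have h3 : (Zs p).2.2 = (e * (aq * q1 - q2) * (r1 - r2) * β1 / (aq * (β1 + β2))) * x
      - m * z + (e * (β1 * q2 + aq * β2 * q1) / (aq * (β1 + β2))) * x * z := by
    rw [hZ]
    simp only [Prod.smul_fst, Prod.smul_snd, Prod.fst_sub, Prod.snd_sub, smul_eq_mul]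
    rw [hd, hXhp, hYhp]
    have hx' := hx.ne'
    have hz' := hz0.ne'
    have hβ1' := hβ1.ne'
    have hβ2' := hβ2.ne'
    have haq' := haq.ne'
    field_simp
    ring
  have h2 : (Zs p).1 = (Zs p).2.1 := by
    rw [hZ]
    simp only [Prod.smul_fst, Prod.smul_snd, Prod.fst_sub, Prod.snd_sub, smul_eq_mul]
    rw [hd, hXhp, hYhp]
    have hx' := hx.ne'
    have hz' := hz0.ne'
    have hβ1' := hβ1.ne'
    have hβ2' := hβ2.ne'
    have haq' := haq.ne'
    field_simp
    ring
  exact ⟨h1, h3, h2⟩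
end

section
/- The planar sliding vector field Z^s(x,z) = ( ((β1 r2 + β2 r1)/(β1+β2))x − (β2/(β1+β2))x z , (e(a_q q1 − q2)(r1−r2)β1/(a_q(β1+β2)))x − m z + (e(β1 q2 + a_q β2 q1)/(a_q(β1+β2)))x z ) vanishes at (0,0) and at (x_c, z_c) = ( a_q m(β1 r2 + β2 r1)/(e(β1 q2 r2 + a_q β2 q1 r1)) , r1 + (β1/β2) r2 ), and these are its only zeros in {x ≥ 0, z ≥ 0}. Moreover, assuming q2 > a_q q1, one has 0 < x_c < m/(e q1) and z_c > r1. -/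
lemma sliding_aux (r1 r2 β1 β2 e q1 q2 aq m x : ℝ)
    (hS0 : β1 + β2 ≠ 0) (hβ20 : β2 ≠ 0) (haq0 : aq ≠ 0)
    (hD0 : e * (β1 * q2 * r2 + aq * β2 * q1 * r1) ≠ 0)
    (h2 : (e * (aq * q1 - q2) * (r1 - r2) * β1 / (aq * (β1 + β2))) * x
         - m * (r1 + (β1 / β2) * r2)
         + (e * (β1 * q2 + aq * β2 * q1) / (aq * (β1 + β2))) * x * (r1 + (β1 / β2) * r2) = 0) :
    x = aq * m * (β1 * r2 + β2 * r1) / (e * (β1 * q2 * r2 + aq * β2 * q1 * r1)) := by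
  field_simp at h2 ⊢
  have h3 : x * (e * (β1 * q2 * r2 + aq * β2 * q1 * r1)) * (β1 + β2)
      = aq * m * (β1 * r2 + β2 * r1) * (β1 + β2) := by linear_combination h2
  rw [eq_div_iff (by convert hD0 using 1; ring)]
  exact mul_right_cancel₀ hS0 (by linear_combination h3)

/-- The planar sliding field `Z^s` vanishes at `(0,0)` and at `(x_c,z_c)`, and
these are its only zeros in the closed first quadrant; moreover, when
`q2 > a_q q1`, one has `0 < x_c < m/(e q1)` and `z_c > r1`. -/
theorem sliding_equilibria
    (r1 r2 β1 β2 e q1 q2 aq m : ℝ) (hr : r2 < r1) (hr2 : 0 < r2)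
    (hβ1 : 0 < β1) (hβ2 : 0 < β2) (he : 0 < e) (hq1 : 0 < q1)
    (hq2 : 0 < q2) (haq : 0 < aq) (hm : 0 < m) (hq : aq * q1 < q2)
    (Zs : ℝ × ℝ → ℝ × ℝ)
    (hZs : ∀ x z, Zs (x, z) =
      (((β1 * r2 + β2 * r1) / (β1 + β2)) * x - (β2 / (β1 + β2)) * x * z,
       (e * (aq * q1 - q2) * (r1 - r2) * β1 / (aq * (β1 + β2))) * x
         - m * z + (e * (β1 * q2 + aq * β2 * q1) / (aq * (β1 + β2))) * x * z)) :
    let xc := aq * m * (β1 * r2 + β2 * r1) / (e * (β1 * q2 * r2 + aq * β2 * q1 * r1))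
    let zc := r1 + (β1 / β2) * r2
    Zs (0, 0) = 0 ∧ Zs (xc, zc) = 0 ∧
    (∀ x z : ℝ, 0 ≤ x → 0 ≤ z → Zs (x, z) = 0 →
      (x, z) = (0, 0) ∨ (x, z) = (xc, zc)) ∧
    0 < xc ∧ xc < m / (e * q1) ∧ r1 < zc := by
  intro xc zc
  have hr1 : 0 < r1 := lt_trans hr2 hr
  have hS : (0:ℝ) < β1 + β2 := by linarith
  have hS0 : (β1 + β2) ≠ 0 := ne_of_gt hS
  have hβ20 : β2 ≠ 0 := ne_of_gt hβ2
  have haq0 : aq ≠ 0 := ne_of_gt haq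
  have hDpos : (0:ℝ) < e * (β1 * q2 * r2 + aq * β2 * q1 * r1) := by positivity
  have hD0 : e * (β1 * q2 * r2 + aq * β2 * q1 * r1) ≠ 0 := ne_of_gt hDpos
  have he0 : e ≠ 0 := ne_of_gt he
  have hxc : 0 < xc := by
    have hnum : 0 < aq * m * (β1 * r2 + β2 * r1) := by positivity
    exact div_pos hnum hDpos
  have hzc : r1 < zc := by
    have : 0 < (β1 / β2) * r2 := by positivity
    simp only [zc]; linarith
  refine ⟨?_, ?_, ?_, hxc, ?_, hzc⟩
  · rw [hZs]; simp
  · rw [hZs]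
    have h1 : ((β1 * r2 + β2 * r1) / (β1 + β2)) * xc - (β2 / (β1 + β2)) * xc * zc = 0 := by
      simp only [xc, zc]
      field_simp
      ring
    have h2 : (e * (aq * q1 - q2) * (r1 - r2) * β1 / (aq * (β1 + β2))) * xc
         - m * zc + (e * (β1 * q2 + aq * β2 * q1) / (aq * (β1 + β2))) * xc * zc = 0 := by
      simp only [xc, zc]
      field_simp
      ring
    rw [h1, h2]; rfl
  · intro x z hx hz hZ
    rw [hZs] at hZ
    have h1 : ((β1 * r2 + β2 * r1) / (β1 + β2)) * x - (β2 / (β1 + β2)) * x * z = 0 :=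
      congrArg Prod.fst hZ
    have h2 : (e * (aq * q1 - q2) * (r1 - r2) * β1 / (aq * (β1 + β2))) * x
         - m * z + (e * (β1 * q2 + aq * β2 * q1) / (aq * (β1 + β2))) * x * z = 0 :=
      congrArg Prod.snd hZ
    have hfac : x * ((β1 * r2 + β2 * r1) - β2 * z) = 0 := by
      have := mul_eq_zero_of_left h1 (β1 + β2)
      field_simp at this
      linarith [this]
    rcases mul_eq_zero.mp hfac with hx0 | hzf
    · left
      subst hx0
      have hmz : m * z = 0 := by
        have := h2
        simp at this
        linarith
      have hz0 : z = 0 := (mul_eq_zero.mp hmz).resolve_left (ne_of_gt hm)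
      simp [hz0]
    · right
      have hzz : z = zc := by
        have : β2 * z = β1 * r2 + β2 * r1 := by linarith
        simp only [zc]
        field_simp
        linarith
      subst hzz
      have hx' : x = xc := sliding_aux r1 r2 β1 β2 e q1 q2 aq m x hS0 hβ20 haq0 hD0 h2
      rw [hx']
  · rw [div_lt_div_iff₀ hDpos (by positivity : (0:ℝ) < e * q1)]
    nlinarith [mul_pos (mul_pos (mul_pos hm he) (mul_pos hβ1 hr2)) (sub_pos.mpr hq)]
end

section
/- For the planar sliding vector field Z^s with components Z^s₁(x,z) = ((β1 r2 + β2 r1)/(β1+β2))x − (β2/(β1+β2))x z and Z^s₂(x,z) = (e(a_q q1 − q2)(r1−r2)β1/(a_q(β1+β2)))x − m z + (e(β1 q2 + a_q β2 q1)/(a_q(β1+β2)))x z, the divergence of the rescaled field (Z^s₁/(x z), Z^s₂/(x z)) equals e(q2 − a_q q1)(r1 − r2)β1 / (a_q(β1+β2) z²), which is strictly positive for all x > 0, z > 0 whenever q2 > a_q q1. -/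
/-- The divergence of the rescaled field `(Z^s₁/(xz), Z^s₂/(xz))` equals
`e(q2 − a_q q1)(r1 − r2)β1/(a_q(β1+β2)z²)`, strictly positive for
`x, z > 0` when `q2 > a_q q1`. -/
theorem dulac_divergence
    (r1 r2 β1 β2 e q1 q2 aq m : ℝ) (hr : r2 < r1) (hr2 : 0 < r2)
    (hβ1 : 0 < β1) (hβ2 : 0 < β2) (he : 0 < e) (hq1 : 0 < q1)
    (hq2 : 0 < q2) (haq : 0 < aq) (hm : 0 < m) (hq : aq * q1 < q2)
    (f g : ℝ × ℝ → ℝ)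
    (hf : ∀ x z, f (x, z) =
      (((β1 * r2 + β2 * r1) / (β1 + β2)) * x - (β2 / (β1 + β2)) * x * z) / (x * z))
    (hg : ∀ x z, g (x, z) =
      ((e * (aq * q1 - q2) * (r1 - r2) * β1 / (aq * (β1 + β2))) * x
        - m * z + (e * (β1 * q2 + aq * β2 * q1) / (aq * (β1 + β2))) * x * z) / (x * z)) :
    ∀ x z : ℝ, 0 < x → 0 < z →
      fderiv ℝ f (x, z) (1, 0) + fderiv ℝ g (x, z) (0, 1) =
        e * (q2 - aq * q1) * (r1 - r2) * β1 / (aq * (β1 + β2) * z ^ 2) ∧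
      0 < e * (q2 - aq * q1) * (r1 - r2) * β1 / (aq * (β1 + β2) * z ^ 2) := by
  intro x z hx hz
  have hβ : (0:ℝ) < β1 + β2 := by linarith
  have hβ' : β1 + β2 ≠ 0 := hβ.ne'
  have hx0 : x ≠ 0 := hx.ne'
  have hz0 : z ≠ 0 := hz.ne'
  set A : ℝ := (β1 * r2 + β2 * r1) / (β1 + β2) with hA
  set B : ℝ := β2 / (β1 + β2) with hB
  set C : ℝ := e * (aq * q1 - q2) * (r1 - r2) * β1 / (aq * (β1 + β2)) with hC
  set D : ℝ := e * (β1 * q2 + aq * β2 * q1) / (aq * (β1 + β2)) with hD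
  have hSopen : IsOpen {p : ℝ × ℝ | 0 < p.1 ∧ 0 < p.2} :=
    (isOpen_lt continuous_const continuous_fst).inter
      (isOpen_lt continuous_const continuous_snd)
  have hmem : (x, z) ∈ {p : ℝ × ℝ | 0 < p.1 ∧ 0 < p.2} := ⟨hx, hz⟩
  -- derivatives of the simplified functions
  have hinv2 : HasFDerivAt (fun p : ℝ × ℝ => (p.2)⁻¹)
      ((ContinuousLinearMap.smulRight (1 : ℝ →L[ℝ] ℝ) (-(z ^ 2)⁻¹)).comp
        (ContinuousLinearMap.snd ℝ ℝ ℝ)) (x, z) :=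
    (hasFDerivAt_inv hz0).comp (x, z) (hasFDerivAt_snd)
  have hinv1 : HasFDerivAt (fun p : ℝ × ℝ => (p.1)⁻¹)
      ((ContinuousLinearMap.smulRight (1 : ℝ →L[ℝ] ℝ) (-(x ^ 2)⁻¹)).comp
        (ContinuousLinearMap.fst ℝ ℝ ℝ)) (x, z) :=
    (hasFDerivAt_inv hx0).comp (x, z) (hasFDerivAt_fst)
  -- f agrees with p ↦ A * p.2⁻¹ - B near (x,z)
  have hfe : f =ᶠ[nhds (x, z)] fun p : ℝ × ℝ => A * (p.2)⁻¹ - B := by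
    filter_upwards [hSopen.mem_nhds hmem] with p hp
    refine (hf p.1 p.2).trans ?_
    have h1 : p.1 ≠ 0 := hp.1.ne'
    have h2 : p.2 ≠ 0 := hp.2.ne'
    rw [hA, hB]
    field_simp
  have hge : g =ᶠ[nhds (x, z)] fun p : ℝ × ℝ => C * (p.2)⁻¹ - m * (p.1)⁻¹ + D := by
    filter_upwards [hSopen.mem_nhds hmem] with p hp
    refine (hg p.1 p.2).trans ?_
    have h1 : p.1 ≠ 0 := hp.1.ne'
    have h2 : p.2 ≠ 0 := hp.2.ne'
    rw [hC, hD]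
    field_simp
  have hF : HasFDerivAt (fun p : ℝ × ℝ => A * (p.2)⁻¹ - B)
      (A • ((ContinuousLinearMap.smulRight (1 : ℝ →L[ℝ] ℝ) (-(z ^ 2)⁻¹)).comp
        (ContinuousLinearMap.snd ℝ ℝ ℝ))) (x, z) :=
    (hinv2.const_smul A).sub_const B
  have hG : HasFDerivAt (fun p : ℝ × ℝ => C * (p.2)⁻¹ - m * (p.1)⁻¹ + D)
      (C • ((ContinuousLinearMap.smulRight (1 : ℝ →L[ℝ] ℝ) (-(z ^ 2)⁻¹)).comp
        (ContinuousLinearMap.snd ℝ ℝ ℝ)) -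
       m • ((ContinuousLinearMap.smulRight (1 : ℝ →L[ℝ] ℝ) (-(x ^ 2)⁻¹)).comp
        (ContinuousLinearMap.fst ℝ ℝ ℝ))) (x, z) :=
    ((hinv2.const_smul C).sub (hinv1.const_smul m)).add_const D
  have hfd : fderiv ℝ f (x, z) = A • ((ContinuousLinearMap.smulRight (1 : ℝ →L[ℝ] ℝ)
      (-(z ^ 2)⁻¹)).comp (ContinuousLinearMap.snd ℝ ℝ ℝ)) := by
    rw [hfe.fderiv_eq, hF.fderiv]
  have hgd : fderiv ℝ g (x, z) =
      C • ((ContinuousLinearMap.smulRight (1 : ℝ →L[ℝ] ℝ) (-(z ^ 2)⁻¹)).comp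
        (ContinuousLinearMap.snd ℝ ℝ ℝ)) -
       m • ((ContinuousLinearMap.smulRight (1 : ℝ →L[ℝ] ℝ) (-(x ^ 2)⁻¹)).comp
        (ContinuousLinearMap.fst ℝ ℝ ℝ)) := by
    rw [hge.fderiv_eq, hG.fderiv]
  constructor
  · rw [hfd, hgd]
    simp
    rw [hC]
    have haq' : aq ≠ 0 := haq.ne'
    field_simp
    ring
  · apply div_pos
    · have h1 : 0 < q2 - aq * q1 := by linarith
      have h2 : 0 < r1 - r2 := by linarith
      positivity
    · positivity
end

section
/- Half the trace of the Jacobian of the sliding vector field Z^s at its interior equilibrium (x_c, z_c) = ( a_q m(β1 r2 + β2 r1)/(e(β1 q2 r2 + a_q β2 q1 r1)) , r1 + (β1/β2) r2 ) equals α = m(q2 − a_q q1)(r1 − r2)β1 β2 / (2(β1+β2)(a_q q1 r1 β2 + q2 r2 β1)), which is strictly positive when q2 > a_q q1. In particular, the sum of the eigenvalues of the Jacobian at (x_c, z_c) is positive. -/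
lemma aux_deriv (a b c d m : ℝ) (p : ℝ × ℝ) :
    (fderiv ℝ (fun p : ℝ × ℝ => (a * p.1 - b * (p.1 * p.2),
        c * p.1 - m * p.2 + d * (p.1 * p.2))) p (1, 0)).1 = a - b * p.2 ∧
    (fderiv ℝ (fun p : ℝ × ℝ => (a * p.1 - b * (p.1 * p.2),
        c * p.1 - m * p.2 + d * (p.1 * p.2))) p (0, 1)).2 = -m + d * p.1 := by
  have hf : HasFDerivAt (fun p : ℝ × ℝ => p.1) (ContinuousLinearMap.fst ℝ ℝ ℝ) p :=
    hasFDerivAt_fst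
  have hs : HasFDerivAt (fun p : ℝ × ℝ => p.2) (ContinuousLinearMap.snd ℝ ℝ ℝ) p :=
    hasFDerivAt_snd
  have h1 := (hf.const_mul a).sub ((hf.mul hs).const_mul b)
  have h2 := ((hf.const_mul c).sub (hs.const_mul m)).add ((hf.mul hs).const_mul d)
  have h : fderiv ℝ (fun p : ℝ × ℝ => (a * p.1 - b * (p.1 * p.2),
      c * p.1 - m * p.2 + d * (p.1 * p.2))) p = _ := (h1.prodMk h2).fderiv
  rw [h]
  constructor <;> simp

/-- Half the trace of the Jacobian of `Z^s` at `(x_c,z_c)` equals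
`α = m(q2 − a_q q1)(r1 − r2)β1β2/(2(β1+β2)(a_q q1 r1 β2 + q2 r2 β1)) > 0`;
in particular the sum of the eigenvalues is positive. -/
theorem trace_at_focus
    (r1 r2 β1 β2 e q1 q2 aq m : ℝ) (hr : r2 < r1) (hr2 : 0 < r2)
    (hβ1 : 0 < β1) (hβ2 : 0 < β2) (he : 0 < e) (hq1 : 0 < q1)
    (hq2 : 0 < q2) (haq : 0 < aq) (hm : 0 < m) (hq : aq * q1 < q2)
    (Zs : ℝ × ℝ → ℝ × ℝ)
    (hZs : ∀ x z, Zs (x, z) =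
      (((β1 * r2 + β2 * r1) / (β1 + β2)) * x - (β2 / (β1 + β2)) * x * z,
       (e * (aq * q1 - q2) * (r1 - r2) * β1 / (aq * (β1 + β2))) * x
         - m * z + (e * (β1 * q2 + aq * β2 * q1) / (aq * (β1 + β2))) * x * z)) :
    let pc : ℝ × ℝ :=
      (aq * m * (β1 * r2 + β2 * r1) / (e * (β1 * q2 * r2 + aq * β2 * q1 * r1)),
       r1 + (β1 / β2) * r2)
    let α := m * (q2 - aq * q1) * (r1 - r2) * β1 * β2 /
      (2 * (β1 + β2) * (aq * q1 * r1 * β2 + q2 * r2 * β1))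
    ((fderiv ℝ Zs pc (1, 0)).1 + (fderiv ℝ Zs pc (0, 1)).2) / 2 = α ∧
    0 < α := by
  intro pc α
  set A := (β1 * r2 + β2 * r1) / (β1 + β2) with hA
  set B := β2 / (β1 + β2) with hB
  set C := e * (aq * q1 - q2) * (r1 - r2) * β1 / (aq * (β1 + β2)) with hC
  set D := e * (β1 * q2 + aq * β2 * q1) / (aq * (β1 + β2)) with hD
  have hfun : Zs = fun p : ℝ × ℝ =>
      (A * p.1 - B * (p.1 * p.2), C * p.1 - m * p.2 + D * (p.1 * p.2)) := by
    funext p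
    obtain ⟨x, z⟩ := p
    rw [hZs]
    simp only [Prod.mk.injEq]
    constructor <;> ring
  have haux := aux_deriv A B C D m pc
  rw [hfun]
  -- positivity facts
  have hβ12 : (0:ℝ) < β1 + β2 := by linarith
  have hr1 : (0:ℝ) < r1 := hr2.trans hr
  have hden1 : (0:ℝ) < β1 * q2 * r2 + aq * β2 * q1 * r1 :=
    add_pos (mul_pos (mul_pos hβ1 hq2) hr2)
      (mul_pos (mul_pos (mul_pos haq hβ2) hq1) hr1)
  have hden2 : (0:ℝ) < aq * q1 * r1 * β2 + q2 * r2 * β1 :=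
    add_pos (mul_pos (mul_pos (mul_pos haq hq1) hr1) hβ2)
      (mul_pos (mul_pos hq2 hr2) hβ1)
  have hαpos : 0 < α := by
    apply div_pos
    · have h1 : 0 < q2 - aq * q1 := by linarith
      have h2 : 0 < r1 - r2 := by linarith
      positivity
    · positivity
  refine ⟨?_, hαpos⟩
  rw [haux.1, haux.2]
  have hzc : A - B * pc.2 = 0 := by
    show A - B * (r1 + (β1 / β2) * r2) = 0
    rw [hA, hB]
    field_simp
    ring
  rw [hzc]
  show (0 + (-m + D * (aq * m * (β1 * r2 + β2 * r1) /
      (e * (β1 * q2 * r2 + aq * β2 * q1 * r1))))) / 2 = α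
  rw [hD]
  have hαdef : α = m * (q2 - aq * q1) * (r1 - r2) * β1 * β2 /
      (2 * (β1 + β2) * (aq * q1 * r1 * β2 + q2 * r2 * β1)) := rfl
  rw [hαdef]
  field_simp
  ring
end

section
/- If m < 4(β1+β2)(r2 β1 + r1 β2)(q2 r2 β1 + a_q q1 r1 β2)² / ((q2 − a_q q1)²(r1 − r2)² β1² β2²), then the Jacobian of the sliding vector field Z^s at its interior equilibrium (x_c, z_c) has negative discriminant, i.e., (trace)² − 4·(determinant) < 0; hence its eigenvalues are a complex conjugate pair with nonzero imaginary part, and since the trace is positive, (x_c, z_c) is a repulsive focus. -/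
set_option maxHeartbeats 1000000 in
/-- Under the bound on `m`, the Jacobian of `Z^s` at `(x_c,z_c)` satisfies
`trace² − 4·det < 0` (complex conjugate eigenvalues) while the trace is
positive: `(x_c,z_c)` is a repulsive focus. -/
theorem repulsive_focus
    (r1 r2 β1 β2 e q1 q2 aq m : ℝ) (hr : r2 < r1) (hr2 : 0 < r2)
    (hβ1 : 0 < β1) (hβ2 : 0 < β2) (he : 0 < e) (hq1 : 0 < q1)
    (hq2 : 0 < q2) (haq : 0 < aq) (hm : 0 < m) (hq : aq * q1 < q2)
    (hmb : m < 4 * (β1 + β2) * (r2 * β1 + r1 * β2) *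
      (q2 * r2 * β1 + aq * q1 * r1 * β2) ^ 2 /
      ((q2 - aq * q1) ^ 2 * (r1 - r2) ^ 2 * β1 ^ 2 * β2 ^ 2))
    (Zs : ℝ × ℝ → ℝ × ℝ)
    (hZs : ∀ x z, Zs (x, z) =
      (((β1 * r2 + β2 * r1) / (β1 + β2)) * x - (β2 / (β1 + β2)) * x * z,
       (e * (aq * q1 - q2) * (r1 - r2) * β1 / (aq * (β1 + β2))) * x
         - m * z + (e * (β1 * q2 + aq * β2 * q1) / (aq * (β1 + β2))) * x * z)) :
    let pc : ℝ × ℝ :=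
      (aq * m * (β1 * r2 + β2 * r1) / (e * (β1 * q2 * r2 + aq * β2 * q1 * r1)),
       r1 + (β1 / β2) * r2)
    let tr := (fderiv ℝ Zs pc (1, 0)).1 + (fderiv ℝ Zs pc (0, 1)).2
    let det := (fderiv ℝ Zs pc (1, 0)).1 * (fderiv ℝ Zs pc (0, 1)).2 -
      (fderiv ℝ Zs pc (0, 1)).1 * (fderiv ℝ Zs pc (1, 0)).2
    tr ^ 2 - 4 * det < 0 ∧ 0 < tr := by
  intro pc tr det
  set A := (β1 * r2 + β2 * r1) / (β1 + β2) with hA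
  set B := β2 / (β1 + β2) with hB
  set C := e * (aq * q1 - q2) * (r1 - r2) * β1 / (aq * (β1 + β2)) with hC
  set D := e * (β1 * q2 + aq * β2 * q1) / (aq * (β1 + β2)) with hD
  have hfun : Zs = fun p : ℝ × ℝ =>
      (A * p.1 - B * p.1 * p.2, C * p.1 - m * p.2 + D * p.1 * p.2) := by
    funext p; cases p; exact hZs _ _
  have h1 : HasFDerivAt (fun p : ℝ × ℝ => A * p.1 - B * p.1 * p.2)
      (A • ContinuousLinearMap.fst ℝ ℝ ℝ -
        ((B * pc.1) • ContinuousLinearMap.snd ℝ ℝ ℝ +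
          pc.2 • (B • ContinuousLinearMap.fst ℝ ℝ ℝ))) pc :=
    (hasFDerivAt_fst.const_mul A).sub
      ((hasFDerivAt_fst.const_mul B).mul hasFDerivAt_snd)
  have h2 : HasFDerivAt (fun p : ℝ × ℝ => C * p.1 - m * p.2 + D * p.1 * p.2)
      ((C • ContinuousLinearMap.fst ℝ ℝ ℝ - m • ContinuousLinearMap.snd ℝ ℝ ℝ) +
        ((D * pc.1) • ContinuousLinearMap.snd ℝ ℝ ℝ +
          pc.2 • (D • ContinuousLinearMap.fst ℝ ℝ ℝ))) pc :=
    ((hasFDerivAt_fst.const_mul C).sub (hasFDerivAt_snd.const_mul m)).add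
      ((hasFDerivAt_fst.const_mul D).mul hasFDerivAt_snd)
  have hZ : HasFDerivAt Zs _ pc := hfun ▸ (HasFDerivAt.prodMk h1 h2)
  have e10 : fderiv ℝ Zs pc (1, 0) = (A - B * pc.2, C + D * pc.2) := by
    rw [hZ.fderiv]; apply Prod.ext <;> simp <;> try ring
  have e01 : fderiv ℝ Zs pc (0, 1) = (-(B * pc.1), -m + D * pc.1) := by
    rw [hZ.fderiv]; apply Prod.ext <;> simp <;> try ring
  have hpc1 : pc.1 = aq * m * (β1 * r2 + β2 * r1) /
      (e * (β1 * q2 * r2 + aq * β2 * q1 * r1)) := rfl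
  have hpc2 : pc.2 = r1 + (β1 / β2) * r2 := rfl
  -- positivity facts
  have hβ : (0:ℝ) < β1 + β2 := by linarith
  have hK : (0:ℝ) < β1 * q2 * r2 + aq * β2 * q1 * r1 := by nlinarith [mul_pos (mul_pos hβ1 hq2) hr2, mul_pos (mul_pos haq hβ2) (mul_pos hq1 (lt_trans hr2 hr))]
  have hP : (0:ℝ) < q2 - aq * q1 := by linarith
  have hR : (0:ℝ) < r1 - r2 := by linarith
  have htr : tr = m * β1 * β2 * ((q2 - aq * q1) * (r1 - r2)) /
      ((β1 + β2) * (β1 * q2 * r2 + aq * β2 * q1 * r1)) := by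
    show (fderiv ℝ Zs pc (1, 0)).1 + (fderiv ℝ Zs pc (0, 1)).2 = _
    rw [e10, e01]
    simp only [hA, hB, hD, hpc1, hpc2]
    field_simp [(ne_of_gt (by linarith [hK]) : β1 * r2 * q2 + β2 * r1 * aq * q1 ≠ 0)]
    ring
  have hdet : det = m * (β1 * r2 + β2 * r1) / (β1 + β2) := by
    show (fderiv ℝ Zs pc (1, 0)).1 * (fderiv ℝ Zs pc (0, 1)).2 -
      (fderiv ℝ Zs pc (0, 1)).1 * (fderiv ℝ Zs pc (1, 0)).2 = _
    rw [e10, e01]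
    simp only [hA, hB, hC, hD, hpc1, hpc2]
    field_simp [(ne_of_gt (by linarith [hK]) : β1 * r2 * q2 + β2 * r1 * aq * q1 ≠ 0)]
    ring
  have htrpos : 0 < tr := by rw [htr]; positivity
  refine ⟨?_, htrpos⟩
  rw [htr, hdet]
  rw [sub_neg, div_pow, ← mul_div_assoc, div_lt_div_iff₀ (by positivity) hβ]
  have hmb' : m * ((q2 - aq * q1) ^ 2 * (r1 - r2) ^ 2 * β1 ^ 2 * β2 ^ 2) <
      4 * (β1 + β2) * (r2 * β1 + r1 * β2) *
        (q2 * r2 * β1 + aq * q1 * r1 * β2) ^ 2 := by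
    rw [← lt_div_iff₀ (by positivity)]
    exact hmb
  nlinarith [mul_lt_mul_of_pos_left (mul_lt_mul_of_pos_left hmb' hm) hβ]
end

section
/- The function H(x,z) = −m − (r2β1 + r1β2)/(β1+β2) + (e(a_q q1 β2 + q2 β1)/(a_q(β1+β2)))x + (β2/(β1+β2))z − m·log(e(a_q q1 β2 + q2 β1)x/(a_q m(β1+β2))) − ((r2β1 + r1β2)/(β1+β2))·log(β2 z/(r2β1 + r1β2)) is a first integral of the Lotka–Volterra part Z_LV of the sliding field: ⟨∇H(x,z), Z_LV(x,z)⟩ = 0 for all x, z > 0, where Z_LV(x,z) = Z^s(x,z) − (0, (e(a_q q1 − q2)(r1−r2)β1/(a_q(β1+β2)))x). -/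
/-- `H` is a first integral of the Lotka–Volterra part `Z_LV` of the sliding
field: `⟨∇H(x,z), Z_LV(x,z)⟩ = 0` for all `x, z > 0`. -/
theorem first_integral_sliding_LV
    (r1 r2 β1 β2 e q1 q2 aq m : ℝ) (hr : r2 < r1) (hr2 : 0 < r2)
    (hβ1 : 0 < β1) (hβ2 : 0 < β2) (he : 0 < e) (hq1 : 0 < q1)
    (hq2 : 0 < q2) (haq : 0 < aq) (hm : 0 < m)
    (H : ℝ × ℝ → ℝ)
    (hH : ∀ x z, H (x, z) =
      -m - (r2 * β1 + r1 * β2) / (β1 + β2)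
        + (e * (aq * q1 * β2 + q2 * β1) / (aq * (β1 + β2))) * x
        + (β2 / (β1 + β2)) * z
        - m * Real.log (e * (aq * q1 * β2 + q2 * β1) * x / (aq * m * (β1 + β2)))
        - ((r2 * β1 + r1 * β2) / (β1 + β2)) *
            Real.log (β2 * z / (r2 * β1 + r1 * β2)))
    (Zs ZLV : ℝ × ℝ → ℝ × ℝ)
    (hZs : ∀ x z, Zs (x, z) =
      (((β1 * r2 + β2 * r1) / (β1 + β2)) * x - (β2 / (β1 + β2)) * x * z,
       (e * (aq * q1 - q2) * (r1 - r2) * β1 / (aq * (β1 + β2))) * x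
         - m * z + (e * (β1 * q2 + aq * β2 * q1) / (aq * (β1 + β2))) * x * z))
    (hZLV : ∀ x z, ZLV (x, z) = Zs (x, z) -
      (0, (e * (aq * q1 - q2) * (r1 - r2) * β1 / (aq * (β1 + β2))) * x)) :
    ∀ x z : ℝ, 0 < x → 0 < z →
      fderiv ℝ H (x, z) (ZLV (x, z)) = 0 := by
  intro x z hx hz
  have hβ : (0:ℝ) < β1 + β2 := by linarith
  have hr1 : (0:ℝ) < r1 := hr2.trans hr
  have harg1 : e * (aq * q1 * β2 + q2 * β1) / (aq * m * (β1 + β2)) * x ≠ 0 := by positivity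
  have harg2 : β2 / (r2 * β1 + r1 * β2) * z ≠ 0 := by positivity
  have hHfun : H = fun p : ℝ × ℝ =>
      -m - (r2 * β1 + r1 * β2) / (β1 + β2)
        + (e * (aq * q1 * β2 + q2 * β1) / (aq * (β1 + β2))) * p.1
        + (β2 / (β1 + β2)) * p.2
        - m * Real.log (e * (aq * q1 * β2 + q2 * β1) / (aq * m * (β1 + β2)) * p.1)
        - ((r2 * β1 + r1 * β2) / (β1 + β2)) *
            Real.log (β2 / (r2 * β1 + r1 * β2) * p.2) := by
    funext p
    rw [hH p.1 p.2,
      show e * (aq * q1 * β2 + q2 * β1) * p.1 / (aq * m * (β1 + β2))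
        = e * (aq * q1 * β2 + q2 * β1) / (aq * m * (β1 + β2)) * p.1 by ring,
      show β2 * p.2 / (r2 * β1 + r1 * β2) = β2 / (r2 * β1 + r1 * β2) * p.2 by ring]
  rw [hHfun, hZLV, hZs]
  have h0 := hasFDerivAt_const (𝕜 := ℝ) (-m - (r2 * β1 + r1 * β2) / (β1 + β2)) ((x, z) : ℝ × ℝ)
  have h1 := (hasFDerivAt_fst (𝕜 := ℝ) (E := ℝ) (F := ℝ) (p := ((x, z) : ℝ × ℝ))).const_mul
    (e * (aq * q1 * β2 + q2 * β1) / (aq * (β1 + β2)))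
  have h2 := (hasFDerivAt_snd (𝕜 := ℝ) (E := ℝ) (F := ℝ) (p := ((x, z) : ℝ × ℝ))).const_mul (β2 / (β1 + β2))
  have h3 := (((hasFDerivAt_fst (𝕜 := ℝ) (E := ℝ) (F := ℝ) (p := ((x, z) : ℝ × ℝ))).const_mul
    (e * (aq * q1 * β2 + q2 * β1) / (aq * m * (β1 + β2)))).log harg1).const_mul m
  have h4 := (((hasFDerivAt_snd (𝕜 := ℝ) (E := ℝ) (F := ℝ) (p := ((x, z) : ℝ × ℝ))).const_mul
    (β2 / (r2 * β1 + r1 * β2))).log harg2).const_mul ((r2 * β1 + r1 * β2) / (β1 + β2))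
  have hd := (((h0.add h1).add h2).sub h3).sub h4
  erw [hd.fderiv]
  simp only [ContinuousLinearMap.add_apply, ContinuousLinearMap.sub_apply,
    ContinuousLinearMap.smul_apply, ContinuousLinearMap.zero_apply,
    ContinuousLinearMap.coe_fst', ContinuousLinearMap.coe_snd',
    Prod.fst_sub, Prod.snd_sub, smul_eq_mul, Prod.mk_sub_mk]
  field_simp
  ring
end
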